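/- arXiv:1012.0540 — 7 statements merged into one kernel-verified Lean document; each statement's English description precedes it below -/
import Mathlib

section
/- If N is a closed normal subgroup of a topological group G with N ⊆ KO(G), then KO(G)/N = KO(G/N); in particular KO(G/KO(G)) is trivial. -/
/-!
Every continuous representation of `G ⧸ N` pulls back to one of `G`, which gives `⊆`.
Conversely, a continuous representation `ρ` of `G` kills `N ⊆ KO(G)`, so it factors through a
representation of `G ⧸ N`, continuous because `G ⧸ N` carries the quotient topology; hence an element
of `G` whose class lies in `KO(G ⧸ N)` lies in `KO(G)`. Applying this to `N = KO(G)` gives the second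
claim.
-/

def KO (G : Type*) [Group G] [TopologicalSpace G] : Subgroup G :=
  ⨅ (n : ℕ) (ρ : G →* GL (Fin n) ℂ) (_ : Continuous ρ), ρ.ker

instance KO.normal (G : Type*) [Group G] [TopologicalSpace G] : (KO G).Normal := by
  constructor
  intro x hx g
  simp only [KO, Subgroup.mem_iInf] at hx ⊢
  intro n ρ hρ
  have h := hx n ρ hρ
  rw [MonoidHom.mem_ker] at h ⊢
  simp [h]

section KO

variable {G H : Type*} [Group G] [TopologicalSpace G] [Group H] [TopologicalSpace H]

theorem mem_KO_iff {g : G} :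
    g ∈ KO G ↔ ∀ (n : ℕ) (ρ : G →* GL (Fin n) ℂ), Continuous ρ → ρ g = 1 := by
  simp only [KO, Subgroup.mem_iInf, MonoidHom.mem_ker]

theorem KO_le_ker {n : ℕ} {ρ : G →* GL (Fin n) ℂ} (hρ : Continuous ρ) : KO G ≤ ρ.ker :=
  fun _ hg => mem_KO_iff.mp hg n ρ hρ

theorem map_KO_le {f : G →* H} (hf : Continuous f) : (KO G).map f ≤ KO H := by
  rintro _ ⟨g, hg, rfl⟩
  exact mem_KO_iff.mpr fun n ρ hρ => mem_KO_iff.mp hg n (ρ.comp f) (hρ.comp hf)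

theorem KO_quotient_le_map {N : Subgroup G} [N.Normal] (hle : N ≤ KO G) :
    KO (G ⧸ N) ≤ (KO G).map (QuotientGroup.mk' N) := by
  intro y hy
  obtain ⟨g, rfl⟩ := QuotientGroup.mk'_surjective N y
  refine ⟨g, mem_KO_iff.mpr fun n ρ hρ => ?_, rfl⟩
  have hN : N ≤ ρ.ker := hle.trans (KO_le_ker hρ)
  have hlift : Continuous (QuotientGroup.lift N ρ hN) :=
    (QuotientGroup.isQuotientMap_mk N).continuous_iff.mpr hρ
  simpa using mem_KO_iff.mp hy n _ hlift

theorem map_KO_quotient {N : Subgroup G} [N.Normal] (hle : N ≤ KO G) :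
    (KO G).map (QuotientGroup.mk' N) = KO (G ⧸ N) :=
  le_antisymm (map_KO_le QuotientGroup.continuous_mk) (KO_quotient_le_map hle)

end KO

theorem KO_quotient_general {G : Type*} [Group G] [TopologicalSpace G]
    (N : Subgroup G) [N.Normal] (hle : N ≤ KO G) :
    (KO G).map (QuotientGroup.mk' N) = KO (G ⧸ N) ∧ KO (G ⧸ KO G) = ⊥ := by
  refine ⟨map_KO_quotient hle, ?_⟩
  rw [← map_KO_quotient le_rfl, Subgroup.map_eq_bot_iff, QuotientGroup.ker_mk']

theorem KO_quotient {G : Type*} [Group G] [TopologicalSpace G] [IsTopologicalGroup G]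
    (N : Subgroup G) [N.Normal] (hclosed : IsClosed (N : Set G)) (hle : N ≤ KO G) :
    (KO G).map (QuotientGroup.mk' N) = KO (G ⧸ N) ∧ KO (G ⧸ KO G) = ⊥ :=
  KO_quotient_general N hle
end

section
/- For any family (A_j)_{j∈J} of topological groups, KO(∏_{j∈J} A_j) = ∏_{j∈J} KO(A_j), where the product carries the product topology. -/
lemma mem_KO {G : Type*} [Group G] [TopologicalSpace G] (x : G) :
    x ∈ KO G ↔ ∀ (n : ℕ) (ρ : G →* GL (Fin n) ℂ), Continuous ρ → ρ x = 1 := by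
  simp [KO, Subgroup.mem_iInf, MonoidHom.mem_ker]

theorem KO_pi {J : Type*} (A : J → Type*) [∀ j, Group (A j)] [∀ j, TopologicalSpace (A j)] :
    KO (∀ j, A j) = Subgroup.pi Set.univ (fun j => KO (A j)) := by
  classical
  ext x
  simp only [Subgroup.mem_pi, Set.mem_univ, forall_true_left]
  constructor
  · intro hx j
    rw [mem_KO]
    intro n ρ hρ
    have h2 := (mem_KO x).mp hx n (ρ.comp (Pi.evalMonoidHom A j))
      (hρ.comp (continuous_apply j))
    simpa using h2
  · intro hx
    rw [mem_KO]
    intro n ρ hρ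
    -- single-coordinate elements are in the kernel
    have hsingle : ∀ j (a : A j), a ∈ KO (A j) → ρ (Pi.mulSingle j a) = 1 := by
      intro j a ha
      have := (mem_KO a).mp ha n (ρ.comp (MonoidHom.mulSingle A j))
        (hρ.comp (continuous_mulSingle j))
      simpa using this
    -- finitely supported truncations of x are in the kernel
    have htrunc : ∀ S : Finset J, ρ (fun j => if j ∈ S then x j else 1) = 1 := by
      intro S
      induction S using Finset.induction_on with
      | empty =>
          have : (fun j => if j ∈ (∅ : Finset J) then x j else 1) = (1 : ∀ j, A j) := by
            funext j; simp
          rw [this, map_one]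
      | @insert a S ha ih =>
          have hdecomp : (fun j => if j ∈ insert a S then x j else 1)
              = Pi.mulSingle a (x a) * (fun j => if j ∈ S then x j else 1) := by
            funext j
            by_cases hj : j = a
            · subst hj
              simp [Pi.mulSingle, ha]
            · simp [Pi.mulSingle, Function.update_of_ne hj, hj]
          rw [hdecomp, map_mul, hsingle a (x a) (hx a), ih, one_mul]
    -- the kernel is closed, and x is in the closure of the truncations
    have hclosed : IsClosed (ρ.ker : Set (∀ j, A j)) := by
      have : (ρ.ker : Set (∀ j, A j)) = ρ ⁻¹' {1} := by
        ext y; simp [MonoidHom.mem_ker]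
      rw [this]
      exact isClosed_singleton.preimage hρ
    have hxcl : x ∈ closure (ρ.ker : Set (∀ j, A j)) := by
      rw [mem_closure_iff]
      intro U hU hxU
      obtain ⟨S, u, hu, hsub⟩ := isOpen_pi_iff.mp hU x hxU
      refine ⟨fun j => if j ∈ S then x j else 1, hsub ?_, ?_⟩
      · intro j hj
        simp only [Finset.mem_coe] at hj
        simpa [hj] using (hu j hj).2
      · exact htrunc S
    rw [hclosed.closure_eq] at hxcl
    exact hxcl
end

section
/- Let G be a connected solvable subgroup of GL_n(ℂ) (with the subspace topology). Then the commutator subgroup G' of G contains no nontrivial compact subgroup; in particular G' is torsion-free. -/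
/-!
Lie–Kolchin for connected solvable groups, by induction on the derived length: the derived
subgroup `N` is connected (it is generated by the connected set of commutators), so it has a
common eigenvector `v₀` with a continuous eigencharacter `χ`. Conjugating by `g` only moves
`χ (g⁻¹ x g)` among the finitely many eigenvalues of `ρ x`, so by connectedness `χ` is
conjugation invariant and its weight space `W` is `G`-stable. On `W`, elements of `N` are scalars
of determinant one, so `χ` takes values in roots of unity, hence `χ = 1` by connectedness of `N`,
and `G` acts on `W` through commuting operators, which have a common eigenvector.

Peeling off invariant lines, the commutator subgroup acts unipotently. A unipotent `u ≠ 1` has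
a vector `w` with `u ^ p w = w + p • (u - 1) w`, so its powers are unbounded and `u` cannot lie
in a compact subgroup.
-/

open Module Set
open scoped commutatorElement

section Topology

variable {G : Type*} [Group G] [TopologicalSpace G] [IsTopologicalGroup G]

theorem Subgroup.isConnected_closure {s : Set G} (hs : IsPreconnected s) (hs₁ : (1 : G) ∈ s) :
    IsConnected ((closure s : Subgroup G) : Set G) := by
  set H : Set G := ((closure s : Subgroup G) : Set G)
  set C := connectedComponentIn H 1 with hC
  have hCH : C ⊆ H := connectedComponentIn_subset H 1
  have hC₁ : (1 : G) ∈ C := mem_connectedComponentIn (one_mem _)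
  have absorb : ∀ {t : Set G} {a : G}, IsPreconnected t → t ⊆ H → a ∈ t → a ∈ C → t ⊆ C :=
    fun ht htH hat haC => by
      rw [hC, connectedComponentIn_eq haC]; exact ht.subset_connectedComponentIn hat htH
  let CSub : Subgroup G :=
    { carrier := C
      one_mem' := hC₁
      mul_mem' := fun {a b} ha hb => by
        refine absorb (isPreconnected_connectedComponentIn.image _
          (continuous_const_mul a).continuousOn) ?_ ⟨1, hC₁, mul_one a⟩ ha ⟨b, hb, rfl⟩
        rintro _ ⟨c, hc, rfl⟩
        exact mul_mem (hCH ha) (hCH hc)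
      inv_mem' := fun {a} ha => by
        refine absorb (isPreconnected_connectedComponentIn.image _ continuous_inv.continuousOn)
          ?_ ⟨1, hC₁, inv_one⟩ hC₁ ⟨a, ha, rfl⟩
        rintro _ ⟨c, hc, rfl⟩
        exact inv_mem (hCH hc) }
  have hHC : H ⊆ C := closure_le CSub |>.mpr (absorb hs subset_closure hs₁ hC₁)
  exact ⟨⟨1, one_mem _⟩, (Subset.antisymm hCH hHC).symm ▸ isPreconnected_connectedComponentIn⟩

theorem isConnected_commutator [ConnectedSpace G] : IsConnected (commutator G : Set G) := by
  rw [commutator_eq_closure]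
  refine Subgroup.isConnected_closure ?_ (one_mem_commutatorSet G)
  have : commutatorSet G = range fun p : G × G => ⁅p.1, p.2⁆ := by
    ext; simp [commutatorSet, eq_comm]
  rw [this]
  exact isPreconnected_range (by simp only [commutatorElement_def]; fun_prop)

end Topology

theorem PreconnectedSpace.constant_of_mapsTo_finite {X Y : Type*} [TopologicalSpace X]
    [PreconnectedSpace X] [TopologicalSpace Y] [T1Space Y] {f : X → Y} (hf : Continuous f)
    {T : Set Y} (hT : T.Finite) (hfT : ∀ x, f x ∈ T) (x y : X) : f x = f y :=
  isPreconnected_univ.constant_of_mapsTo hT.isDiscrete hf.continuousOn (fun x _ => hfT x)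
    trivial trivial

theorem map_subtype_derivedSeries_commutator (G : Type*) [Group G] (n : ℕ) :
    (derivedSeries (commutator G) n).map (commutator G).subtype = derivedSeries G (n + 1) := by
  induction n with
  | zero => rw [derivedSeries_zero, ← MonoidHom.range_eq_map, Subgroup.range_subtype,
      derivedSeries_one]
  | succ n ih =>
    rw [derivedSeries_succ, Subgroup.map_commutator, ih, derivedSeries_succ G (n + 1)]

theorem derivedSeries_commutator_eq_bot {G : Type*} [Group G] {n : ℕ}
    (h : derivedSeries G (n + 1) = ⊥) : derivedSeries (commutator G) n = ⊥ := by
  rw [← Subgroup.map_eq_bot_iff_of_injective _ (commutator G).subtype_injective,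
    map_subtype_derivedSeries_commutator, h]

namespace Module.End

section Ring

variable {R M : Type*} [Ring R] [AddCommGroup M] [Module R M]

theorem isNilpotent_of_isNilpotent_mapQ {f : End R M} {L : Submodule R M}
    (hfL : L ≤ L.comap f) (hL : L ≤ LinearMap.ker f)
    (h : IsNilpotent (L.mapQ L f hfL)) : IsNilpotent f := by
  obtain ⟨m, hm⟩ := h
  refine ⟨m + 1, LinearMap.ext fun u => ?_⟩
  have : (f ^ m) u ∈ L := by
    rw [← Submodule.Quotient.mk_eq_zero,
      ← Submodule.mapQ_apply L L (f ^ m) (h := L.le_comap_pow_of_le_comap hfL m),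
      Submodule.mapQ_pow L hfL, hm, LinearMap.zero_apply]
  rw [pow_succ', mul_apply]
  exact hL this

theorem exists_apply_ne_zero_of_isNilpotent {f : End R M} (hf : IsNilpotent f) (hf₀ : f ≠ 0) :
    ∃ w : M, f w ≠ 0 ∧ f (f w) = 0 := by
  have : Nontrivial (End R M) := ⟨⟨f, 0, hf₀⟩⟩
  set c := nilpotencyClass f
  have hc : 2 ≤ c := by
    by_contra! h
    interval_cases hc : c
    · exact (pos_nilpotencyClass_iff.mpr hf).ne' hc
    · exact hf₀ (eq_zero_of_nilpotencyClass_eq_one hc)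
  obtain ⟨u, hu⟩ : ∃ u, (f ^ (c - 1)) u ≠ 0 := by
    by_contra! h
    exact pow_pred_nilpotencyClass hf (LinearMap.ext h)
  refine ⟨(f ^ (c - 2)) u, ?_, ?_⟩
  · rwa [← mul_apply, ← pow_succ', show c - 2 + 1 = c - 1 by omega]
  · rw [← mul_apply, ← sq, ← mul_apply, ← pow_add, show 2 + (c - 2) = c by omega,
      pow_nilpotencyClass hf, LinearMap.zero_apply]

theorem pow_apply_eq_add_smul {f : End R M} {w : M} (hw : (f - 1) ((f - 1) w) = 0) (p : ℕ) :
    (f ^ p) w = w + p • (f - 1) w := by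
  induction p with
  | zero => simp
  | succ p ih =>
    have hf : f ((f - 1) w) = (f - 1) w := by
      rwa [LinearMap.sub_apply, one_apply, sub_eq_zero] at hw
    rw [pow_succ', mul_apply, ih, map_add, map_nsmul, hf, succ_nsmul', ← add_assoc]
    congr 1
    simp

end Ring

theorem exists_common_eigenvector_of_commute {K V : Type*} [Field K] [IsAlgClosed K]
    [AddCommGroup V] [Module K V] [FiniteDimensional K V] [Nontrivial V] {ι : Type*}
    (f : ι → End K V) (hf : ∀ i j, Commute (f i) (f j)) :
    ∃ v : V, v ≠ 0 ∧ ∀ i, ∃ c : K, f i v = c • v := by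
  let S : Set (Submodule K V) := {W | W ≠ ⊥ ∧ ∀ i, W ≤ W.comap (f i)}
  obtain ⟨W, ⟨hW, hWf⟩, hmin⟩ :=
    wellFounded_lt.has_min S ⟨⊤, top_ne_bot, fun i => le_top⟩
  -- `f i` has an eigenvalue on the minimal invariant subspace `W`, and its eigenspace
  -- there is again invariant, so it is all of `W`
  have scalar : ∀ i, ∃ c : K, ∀ w ∈ W, f i w = c • w := by
    intro i
    have : Nontrivial W := Submodule.nontrivial_iff_ne_bot.mpr hW
    obtain ⟨c, hc⟩ := exists_eigenvalue ((f i).restrict (hWf i))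
    obtain ⟨w, hw⟩ := hc.exists_hasEigenvector
    let E := W ⊓ eigenspace (f i) c
    have hEW : E = W := by
      by_contra hne
      refine hmin E ⟨?_, fun j v ⟨hvW, hv⟩ => ⟨hWf j hvW, ?_⟩⟩ (lt_of_le_of_ne inf_le_left hne)
      · refine (Submodule.ne_bot_iff _).mpr ⟨w, ⟨w.2, ?_⟩, by simpa using hw.2⟩
        simpa [mem_eigenspace_iff, Subtype.ext_iff] using hw.apply_eq_smul
      · rw [SetLike.mem_coe, mem_eigenspace_iff] at hv ⊢
        rw [← mul_apply, (hf i j).eq, mul_apply, hv, map_smul]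
    exact ⟨c, fun w hw => mem_eigenspace_iff.mp (hEW ▸ hw : w ∈ E).2⟩
  choose c hc using scalar
  obtain ⟨v, hvW, hv⟩ := (Submodule.ne_bot_iff W).mp hW
  exact ⟨v, hv, fun i => ⟨c i, hc i v hvW⟩⟩

theorem eq_one_of_isNilpotent_sub_one {𝕜 V : Type*} [RCLike 𝕜] [AddCommGroup V] [Module 𝕜 V]
    {f : End 𝕜 V} (hf : IsNilpotent (f - 1))
    (hbdd : ∀ (φ : Dual 𝕜 V) (v : V), Bornology.IsBounded (range fun p : ℕ => φ ((f ^ p) v))) :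
    f = 1 := by
  by_contra hne
  obtain ⟨w, hw, hw₂⟩ := exists_apply_ne_zero_of_isNilpotent hf (sub_ne_zero.mpr hne)
  obtain ⟨φ, hφ⟩ := Projective.exists_dual_eq_one 𝕜 hw
  obtain ⟨C, hC⟩ := (hbdd φ w).exists_norm_le
  obtain ⟨p, hp⟩ := exists_nat_gt (C + ‖φ w‖)
  have hφp : φ ((f ^ p) w) = φ w + p := by
    rw [pow_apply_eq_add_smul hw₂, map_add, map_nsmul, hφ, nsmul_eq_mul, mul_one]
  have : ‖(p : 𝕜)‖ ≤ C + ‖φ w‖ := calc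
    ‖(p : 𝕜)‖ = ‖φ ((f ^ p) w) - φ w‖ := by rw [hφp, add_sub_cancel_left]
    _ ≤ ‖φ ((f ^ p) w)‖ + ‖φ w‖ := norm_sub_le _ _
    _ ≤ C + ‖φ w‖ := by gcongr; exact hC _ ⟨p, rfl⟩
  rw [RCLike.norm_natCast] at this
  linarith

end Module.End

namespace Representation

variable {K G V : Type*} [Field K] [Group G] [AddCommGroup V] [Module K V]
  (ρ : Representation K G V)

theorem det_eq_one_of_mem_commutator [FiniteDimensional K V] {x : G} (hx : x ∈ commutator G) :
    LinearMap.det (ρ x) = 1 := by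
  have := Abelianization.commutator_subset_ker ((Units.map LinearMap.det).comp ρ.asGroupHom) hx
  simpa [Units.ext_iff, asGroupHom_apply] using this

theorem pow_finrank_eq_one_of_mem_commutator {W : Submodule K V} [FiniteDimensional K W]
    (hW : ∀ g, W ≤ W.comap (ρ g)) {x : G} (hx : x ∈ commutator G) {c : K}
    (hc : ∀ w ∈ W, ρ x w = c • w) : c ^ finrank K W = 1 := by
  have hscalar : ρ.subrepresentation W hW x = c • 1 :=
    LinearMap.ext fun w => Subtype.ext (hc w w.2)
  simpa [hscalar, LinearMap.det_smul] using
    (ρ.subrepresentation W hW).det_eq_one_of_mem_commutator hx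

theorem apply_apply_eq_apply_conj (x g : G) (v : V) :
    ρ x (ρ g v) = ρ g (ρ (g⁻¹ * x * g) v) := by
  rw [← End.mul_apply, ← map_mul, ← End.mul_apply, ← map_mul]
  group

def weightSpace (N : Subgroup G) (χ : G → K) : Submodule K V :=
  ⨅ x ∈ N, End.eigenspace (ρ x) (χ x)

theorem mem_weightSpace {N : Subgroup G} {χ : G → K} {v : V} :
    v ∈ ρ.weightSpace N χ ↔ ∀ x ∈ N, ρ x v = χ x • v := by
  simp [weightSpace]

theorem weightSpace_le_comap {N : Subgroup G} [N.Normal] {χ : G → K}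
    (hχ : ∀ x ∈ N, ∀ g, χ (g⁻¹ * x * g) = χ x) (g : G) :
    ρ.weightSpace N χ ≤ (ρ.weightSpace N χ).comap (ρ g) := by
  intro v hv
  simp only [Submodule.mem_comap, mem_weightSpace] at hv ⊢
  intro x hx
  rw [apply_apply_eq_apply_conj, hv _ (‹N.Normal›.conj_mem' x hx g), map_smul, hχ x hx]

section Topological

variable [TopologicalSpace K] [TopologicalSpace G]

def ContinuousMatrixCoeffs : Prop :=
  ∀ (φ : Dual K V) (v : V), Continuous fun g => φ (ρ g v)

variable {ρ} in
theorem ContinuousMatrixCoeffs.comp_subtype (hρ : ρ.ContinuousMatrixCoeffs) (H : Subgroup G) :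
    ContinuousMatrixCoeffs (ρ.comp H.subtype) :=
  fun φ v => (hρ φ v).comp continuous_subtype_val

variable {ρ} in
theorem ContinuousMatrixCoeffs.quotient (hρ : ρ.ContinuousMatrixCoeffs) (L : Submodule K V)
    (hL : ∀ g, L ≤ L.comap (ρ g)) : (ρ.quotient L hL).ContinuousMatrixCoeffs := by
  intro φ w
  obtain ⟨v, rfl⟩ := L.mkQ_surjective w
  exact hρ (φ ∘ₗ L.mkQ) v

variable [T1Space K] [IsTopologicalGroup G] [ConnectedSpace G]

theorem eigencharacter_conj_eq [FiniteDimensional K V] {N : Subgroup G} [N.Normal]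
    {χ : G → K} (hχ : Continuous χ) {v₀ : V} (hv₀ : v₀ ≠ 0) (hN : ∀ x ∈ N, ρ x v₀ = χ x • v₀)
    {x : G} (hx : x ∈ N) (g : G) : χ (g⁻¹ * x * g) = χ x := by
  have heigen : ∀ g : G, End.HasEigenvalue (ρ x) (χ (g⁻¹ * x * g)) := fun g =>
    End.hasEigenvalue_of_hasEigenvector ⟨End.mem_eigenspace_iff.mpr <| by
      rw [apply_apply_eq_apply_conj, hN _ (‹N.Normal›.conj_mem' x hx g), map_smul],
      (map_ne_zero_iff _ (ρ.apply_bijective g).injective).mpr hv₀⟩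
  have := PreconnectedSpace.constant_of_mapsTo_finite (f := fun g => χ (g⁻¹ * x * g))
    (by fun_prop) (End.finite_hasEigenvalue (ρ x)) heigen g 1
  simpa using this

variable [FiniteDimensional K V] [IsAlgClosed K]

theorem exists_common_eigenvector_of_commutator (hρ : ρ.ContinuousMatrixCoeffs) {v₀ : V}
    (hv₀ : v₀ ≠ 0) (hN : ∀ x ∈ commutator G, ∃ c : K, ρ x v₀ = c • v₀) :
    ∃ v : V, v ≠ 0 ∧ ∀ g, ∃ c : K, ρ g v = c • v := by
  obtain ⟨φ₀, hφ₀⟩ := Projective.exists_dual_eq_one K hv₀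
  set χ : G → K := fun g => φ₀ (ρ g v₀)
  have hχ : Continuous χ := hρ φ₀ v₀
  have hχN : ∀ x ∈ commutator G, ρ x v₀ = χ x • v₀ := by
    intro x hx
    obtain ⟨c, hc⟩ := hN x hx
    simp [χ, hc, hφ₀]
  set W := ρ.weightSpace (commutator G) χ
  have hW : ∀ g, W ≤ W.comap (ρ g) :=
    ρ.weightSpace_le_comap fun x hx => ρ.eigencharacter_conj_eq hχ hv₀ hχN hx
  have hv₀W : v₀ ∈ W := ρ.mem_weightSpace.mpr hχN
  have : Nontrivial W :=
    Submodule.nontrivial_iff_ne_bot.mpr ((Submodule.ne_bot_iff W).mpr ⟨v₀, hv₀W, hv₀⟩)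
  -- `χ` is a continuous map on the connected group `commutator G` with values in the
  -- `finrank W`-th roots of unity, hence trivial
  have hχ₁ : ∀ x ∈ commutator G, χ x = 1 := by
    have hd : 0 < finrank K W := finrank_pos
    have : ConnectedSpace (commutator G) := Subtype.connectedSpace isConnected_commutator
    intro x hx
    have hroot (y : commutator G) : χ y ^ finrank K W = 1 :=
      ρ.pow_finrank_eq_one_of_mem_commutator hW y.2 fun w hw => ρ.mem_weightSpace.mp hw y y.2
    simpa [χ, hφ₀] using PreconnectedSpace.constant_of_mapsTo_finite
      (hχ.comp continuous_subtype_val) (Polynomial.nthRoots (finrank K W) (1 : K)).finite_toSet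
      (fun y => by simpa [Polynomial.mem_nthRoots hd] using hroot y) ⟨x, hx⟩ 1
  set σ := ρ.subrepresentation W hW
  have hσ : ∀ x ∈ commutator G, σ x = 1 := fun x hx => LinearMap.ext fun w =>
    Subtype.ext (by simpa [σ, hχ₁ x hx] using ρ.mem_weightSpace.mp w.2 x hx)
  have hcomm : ∀ a b : G, Commute (σ a) (σ b) := by
    intro a b
    have hab : ⁅a, b⁆ ∈ commutator G :=
      Subgroup.commutator_mem_commutator (Subgroup.mem_top a) (Subgroup.mem_top b)
    rw [Commute, SemiconjBy, ← map_mul, ← map_mul, show a * b = ⁅a, b⁆ * (b * a) by group,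
      map_mul σ ⁅a, b⁆, hσ _ hab, one_mul]
  obtain ⟨w, hw, hwσ⟩ := End.exists_common_eigenvector_of_commute σ hcomm
  exact ⟨w, by simpa using hw, fun g => (hwσ g).imp fun c hc => congrArg Subtype.val hc⟩

theorem exists_common_eigenvector [Group.IsSolvable G] [Nontrivial V]
    (hρ : ρ.ContinuousMatrixCoeffs) : ∃ v : V, v ≠ 0 ∧ ∀ g, ∃ c : K, ρ g v = c • v := by
  obtain ⟨k, hk⟩ := Group.IsSolvable.solvable (G := G)
  induction k generalizing G with
  | zero =>
    obtain ⟨v, hv⟩ := exists_ne (0 : V)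
    refine ⟨v, hv, fun g => ⟨1, ?_⟩⟩
    have hg : g ∈ derivedSeries G 0 := by rw [derivedSeries_zero]; exact Subgroup.mem_top g
    rw [hk, Subgroup.mem_bot] at hg
    rw [hg, map_one, one_smul, Module.End.one_apply]
  | succ k ih =>
    have : ConnectedSpace (commutator G) := Subtype.connectedSpace isConnected_commutator
    obtain ⟨v, hv, hvN⟩ := ih (ρ.comp (commutator G).subtype) (hρ.comp_subtype _)
      (derivedSeries_commutator_eq_bot hk)
    exact ρ.exists_common_eigenvector_of_commutator hρ hv fun x hx => hvN ⟨x, hx⟩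

theorem isNilpotent_sub_one_of_mem_commutator [Group.IsSolvable G]
    (hρ : ρ.ContinuousMatrixCoeffs) {g : G} (hg : g ∈ commutator G) : IsNilpotent (ρ g - 1) := by
  induction hd : finrank K V using Nat.strong_induction_on generalizing V with
  | _ d ih =>
  rcases subsingleton_or_nontrivial V with hV | hV
  · exact ⟨1, Subsingleton.elim _ _⟩
  obtain ⟨v, hv, hvρ⟩ := ρ.exists_common_eigenvector hρ
  set L := K ∙ v
  have hL : ∀ h, L ≤ L.comap (ρ h) := fun h => by
    obtain ⟨c, hc⟩ := hvρ h
    rw [Submodule.span_singleton_le_iff_mem, Submodule.mem_comap, hc]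
    exact Submodule.smul_mem _ c (Submodule.mem_span_singleton_self v)
  have hgv : ρ g v = v := by
    obtain ⟨c, hc⟩ := hvρ g
    have := ρ.pow_finrank_eq_one_of_mem_commutator hL hg (c := c) fun w hw => by
      obtain ⟨a, rfl⟩ := Submodule.mem_span_singleton.mp hw
      rw [map_smul, hc, smul_comm]
    rw [finrank_span_singleton hv, pow_one] at this
    rw [hc, this, one_smul]
  have hLker : L ≤ LinearMap.ker (ρ g - 1) := by
    rw [Submodule.span_singleton_le_iff_mem, LinearMap.mem_ker, LinearMap.sub_apply, hgv,
      Module.End.one_apply, sub_self]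
  have hlt : finrank K (V ⧸ L) < d := by
    rw [← hd, ← L.finrank_quotient_add_finrank, finrank_span_singleton hv]
    omega
  refine End.isNilpotent_of_isNilpotent_mapQ (fun u hu => ?_) hLker ?_
  · exact L.sub_mem (hL g hu) hu
  · convert ih _ hlt (ρ.quotient L hL) (hρ.quotient L hL) rfl using 1
    ext u
    simp

end Topological

theorem eq_bot_of_isCompact_of_le_commutator {G V : Type*} [Group G] [TopologicalSpace G]
    [IsTopologicalGroup G] [ConnectedSpace G] [Group.IsSolvable G] [AddCommGroup V]
    [Module ℂ V] [FiniteDimensional ℂ V] {ρ : Representation ℂ G V}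
    (hρ : ρ.ContinuousMatrixCoeffs) (hinj : Function.Injective ρ) {H : Subgroup G}
    (hH : IsCompact (H : Set G)) (hHG : H ≤ commutator G) : H = ⊥ := by
  refine (Subgroup.eq_bot_iff_forall H).mpr fun x hx => hinj ?_
  rw [map_one]
  refine End.eq_one_of_isNilpotent_sub_one (ρ.isNilpotent_sub_one_of_mem_commutator hρ (hHG hx))
    fun φ v => ((hH.image (hρ φ v)).isBounded).subset ?_
  rintro _ ⟨p, rfl⟩
  exact ⟨x ^ p, H.pow_mem hx p, by simp⟩

end Representation

noncomputable def Subgroup.toRepresentation {n R : Type*} [Fintype n] [DecidableEq n]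
    [CommRing R] (G : Subgroup (GL n R)) : Representation R G (n → R) :=
  (Matrix.toLinAlgEquiv' : Matrix n n R ≃ₐ[R] End R (n → R)).toMonoidHom.comp
    ((Units.coeHom _).comp G.subtype)

theorem Subgroup.toRepresentation_injective {n R : Type*} [Fintype n] [DecidableEq n]
    [CommRing R] (G : Subgroup (GL n R)) : Function.Injective G.toRepresentation :=
  Matrix.toLinAlgEquiv'.injective.comp (Units.val_injective.comp Subtype.val_injective)

theorem Subgroup.continuousMatrixCoeffs_toRepresentation {n 𝕜 : Type*} [Fintype n]
    [DecidableEq n] [NontriviallyNormedField 𝕜] [CompleteSpace 𝕜] (G : Subgroup (GL n 𝕜)) :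
    G.toRepresentation.ContinuousMatrixCoeffs := fun φ _ =>
  φ.continuous_of_finiteDimensional.comp
    ((Units.continuous_val.comp continuous_subtype_val).matrix_mulVec continuous_const)

theorem commutator_of_connected_solvable_no_compact (n : ℕ) (G : Subgroup (GL (Fin n) ℂ))
    (hconn : IsConnected (G : Set (GL (Fin n) ℂ))) (hsolv : IsSolvable G) :
    (∀ K : Subgroup G, IsCompact (K : Set G) → K ≤ commutator G → K = ⊥) ∧
      ∀ g : G, g ∈ commutator G → IsOfFinOrder g → g = 1 := by
  have : ConnectedSpace G := Subtype.connectedSpace hconn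
  have : Group.IsSolvable G := hsolv
  have hcompact : ∀ K : Subgroup G, IsCompact (K : Set G) → K ≤ commutator G → K = ⊥ :=
    fun _ => Representation.eq_bot_of_isCompact_of_le_commutator
      G.continuousMatrixCoeffs_toRepresentation G.toRepresentation_injective
  refine ⟨hcompact, fun g hg hfin => ?_⟩
  have := hcompact (Subgroup.zpowers g) (finite_zpowers.mpr hfin).isCompact
    (Subgroup.zpowers_le.mpr hg)
  simpa [this] using Subgroup.mem_zpowers g
end

section
/- Any locally compact group G with a dense monothetic subgroup is either compact or topologically isomorphic to the discrete group ℤ (Weil's Lemma). -/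
/-!
Let `g` generate a dense cyclic subgroup. If `1` is isolated, `G` is discrete, so `⟨g⟩ = G` is
either finite or infinite cyclic. Otherwise `1` is an accumulation point of the dense set `⟨g⟩`,
hence of the powers `g ^ n` with `n → +∞` as well as with `n → -∞`. Take an open `V ∋ 1` with
compact closure. Every `x` lies in `g ^ n • V` for arbitrarily large and arbitrarily small `n`,
and compactness gives `N` with `closure V ⊆ ⋃_{1 ≤ i ≤ N} g ^ i • V`: these indices `n` have gaps
at most `N`, so one of them lies in `[1, N]` and `G = ⋃_{1 ≤ i ≤ N} g ^ i • closure V` is compact.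
-/

open Filter Set Pointwise Topology
open Subgroup (zpowers)

theorem Int.exists_mem_Icc_of_forall_exists_add_mem {A : Set ℤ} {N : ℤ}
    (h₀ : ∃ a ∈ A, a ≤ 0) (hstep : ∀ a ∈ A, ∃ i ∈ Icc 1 N, a + i ∈ A) :
    ∃ n ∈ Icc 1 N, n ∈ A := by
  classical
  obtain ⟨a, ⟨haA, ha0⟩, hmax⟩ :=
    Int.exists_greatest_of_bdd (P := fun a => a ∈ A ∧ a ≤ 0) ⟨0, fun _ h => h.2⟩ h₀
  obtain ⟨i, ⟨hi1, hiN⟩, hai⟩ := hstep a haA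
  have hpos : 0 < a + i := by
    by_contra! hle
    linarith [hmax (a + i) ⟨hai, hle⟩]
  exact ⟨a + i, ⟨by omega, by omega⟩, hai⟩

theorem Dense.accPt_of_not_isOpen_singleton {X : Type*} [TopologicalSpace X] [T1Space X]
    {D : Set X} (hD : Dense D) {x : X} (hx : ¬IsOpen ({x} : Set X)) : AccPt x (𝓟 D) := by
  rw [accPt_iff_nhds]
  intro U hU
  have hne : (interior U \ {x}).Nonempty := by
    rw [nonempty_iff_ne_empty, Ne, sdiff_eq_empty]
    intro hsub
    have : interior U = {x} :=
      hsub.antisymm (singleton_subset_iff.2 (mem_interior_iff_mem_nhds.2 hU))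
    exact hx (this ▸ isOpen_interior)
  obtain ⟨y, hyD, hyU, hyx⟩ := hD.exists_mem_open (isOpen_interior.sdiff isClosed_singleton) hne
  exact ⟨y, ⟨interior_subset hyU, hyD⟩, hyx⟩

section ZPowers

variable {G : Type*} [Group G] [TopologicalSpace G] [IsTopologicalGroup G] {g : G}

theorem mapClusterPt_one_atTop_zpow_of_accPt [T1Space G] (hacc : AccPt (1 : G) (𝓟 (zpowers g))) :
    MapClusterPt (1 : G) atTop (g ^ · : ℤ → G) := by
  rw [mapClusterPt_iff_frequently]
  intro U hU
  have hinf : {n : ℤ | g ^ n ∈ U ∩ U⁻¹}.Infinite := by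
    refine Set.Infinite.of_image (g ^ · : ℤ → G) ?_
    change ((g ^ ·) '' ((g ^ · : ℤ → G) ⁻¹' (U ∩ U⁻¹))).Infinite
    rw [image_preimage_eq_inter_range]
    have := Set.Infinite.of_accPt (hacc.nhds_inter (inter_mem hU (inv_mem_nhds_one G hU)))
    simpa [Subgroup.coe_zpowers] using this
  rw [← frequently_cofinite_iff_infinite, Int.cofinite_eq, frequently_sup] at hinf
  rcases hinf with hbot | htop
  · refine tendsto_neg_atBot_atTop.frequently (hbot.mono fun n hn => ?_)
    simpa [zpow_neg] using hn.2
  · exact htop.mono fun n hn => hn.1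

theorem Dense.frequently_atTop_zpow_mem (hg : Dense (zpowers g : Set G))
    (h : MapClusterPt (1 : G) atTop (g ^ · : ℤ → G)) {W : Set G} (hW : IsOpen W)
    (hne : W.Nonempty) : ∃ᶠ n : ℤ in atTop, g ^ n ∈ W := by
  obtain ⟨_, ⟨k, rfl⟩, hk⟩ := hg.exists_mem_open hW hne
  have hshift : {y | g ^ k * y ∈ W} ∈ 𝓝 (1 : G) :=
    (hW.preimage (by fun_prop)).mem_nhds (by simpa using hk)
  refine (tendsto_atTop_add_const_left atTop k tendsto_id).frequently ?_
  simpa [zpow_add] using mapClusterPt_iff_frequently.1 h _ hshift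

theorem Dense.frequently_atTop_mem_zpow_smul (hg : Dense (zpowers g : Set G))
    (h : MapClusterPt (1 : G) atTop (g ^ · : ℤ → G)) {V : Set G} (hV : IsOpen V)
    (hV1 : (1 : G) ∈ V) (x : G) : ∃ᶠ n : ℤ in atTop, x ∈ g ^ n • V := by
  refine hg.frequently_atTop_zpow_mem h (W := {y | x ∈ y • V}) ?_ ⟨x, ?_⟩
  · simp_rw [mem_smul_set_iff_inv_smul_mem]
    exact hV.preimage (by fun_prop)
  · simpa [mem_smul_set_iff_inv_smul_mem] using hV1

theorem compactSpace_of_mapClusterPt_one_atTop_zpow [WeaklyLocallyCompactSpace G]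
    (hg : Dense (zpowers g : Set G)) (h : MapClusterPt (1 : G) atTop (g ^ · : ℤ → G)) :
    CompactSpace G := by
  obtain ⟨V, hVo, hV1, hVc⟩ := exists_isOpen_mem_isCompact_closure (1 : G)
  have htop := hg.frequently_atTop_mem_zpow_smul h hVo hV1
  have hg' : Dense (zpowers g⁻¹ : Set G) := by rwa [Subgroup.zpowers_inv]
  have h' : MapClusterPt (1 : G) atTop (g⁻¹ ^ · : ℤ → G) := by
    simpa [Function.comp_def] using h.continuousAt_comp continuous_inv.continuousAt
  have hbot := hg'.frequently_atTop_mem_zpow_smul h' hVo hV1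
  obtain ⟨N, hN⟩ : ∃ N : ℤ, closure V ⊆ ⋃ i ∈ Icc 1 N, g ^ i • V := by
    refine hVc.elim_directed_cover _ (fun N => isOpen_biUnion fun i _ => hVo.smul _) ?_
      (Monotone.directed_le fun _ _ hle => biUnion_subset_biUnion_left (Icc_subset_Icc_right hle))
    intro y _
    obtain ⟨n, hn1, hn⟩ := frequently_atTop.1 (htop y) 1
    exact mem_iUnion.2 ⟨n, mem_iUnion₂.2 ⟨n, ⟨hn1, le_rfl⟩, hn⟩⟩
  have hcover : ∀ x : G, ∃ n ∈ Icc 1 N, x ∈ g ^ n • V := by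
    intro x
    refine Int.exists_mem_Icc_of_forall_exists_add_mem (A := {n | x ∈ g ^ n • V}) ?_ ?_
    · obtain ⟨n, hn0, hn⟩ := frequently_atTop.1 (hbot x) 0
      exact ⟨-n, show x ∈ g ^ (-n) • V by rwa [← inv_zpow'], by omega⟩
    · intro a ha
      obtain ⟨i, hi, hiV⟩ :=
        mem_iUnion₂.1 (hN (subset_closure (mem_smul_set_iff_inv_smul_mem.1 ha)))
      refine ⟨i, hi, ?_⟩
      have := smul_mem_smul_set (a := g ^ a) hiV
      rwa [smul_inv_smul, smul_smul, ← zpow_add] at this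
  rw [← isCompact_univ_iff]
  refine ((finite_Icc 1 N).isCompact_biUnion fun n _ => hVc.smul (g ^ n)).of_isClosed_subset
    isClosed_univ fun x _ => ?_
  obtain ⟨n, hn, hx⟩ := hcover x
  exact mem_iUnion₂.2 ⟨n, hn, smul_set_mono subset_closure hx⟩

end ZPowers

/-- Weil's Lemma: a locally compact monothetic group is compact or topologically
isomorphic to the discrete group `ℤ`. -/
theorem weil_lemma (G : Type*) [Group G] [TopologicalSpace G] [IsTopologicalGroup G]
    [LocallyCompactSpace G] [T2Space G]
    (hmono : ∃ g : G, Dense ((Subgroup.zpowers g : Subgroup G) : Set G)) :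
    CompactSpace G ∨ ∃ e : G ≃* Multiplicative ℤ, Continuous e ∧ Continuous e.symm := by
  obtain ⟨g, hg⟩ := hmono
  by_cases h1 : IsOpen ({1} : Set G)
  · have := discreteTopology_of_isOpen_singleton_one h1
    have htop : zpowers g = ⊤ := Subgroup.coe_eq_univ.1 (dense_discrete.1 hg)
    cases finite_or_infinite G
    · exact .inl inferInstance
    · exact .inr ⟨(intEquivOfZPowersEqTop g htop).symm, continuous_of_discreteTopology,
        continuous_of_discreteTopology⟩
  · exact .inl <| compactSpace_of_mapClusterPt_one_atTop_zpow hg <|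
      mapClusterPt_one_atTop_zpow_of_accPt (hg.accPt_of_not_isOpen_singleton h1)
end

section
/- The Pontryagin dual of a compact connected monothetic abelian group is isomorphic (as an abstract group) to a subgroup of the additive group ℝ with the discrete topology, equivalently a torsion-free group of rank at most 2^ℵ₀. -/
/-!
Evaluation at a topological generator `a` embeds the dual into the circle, and connectedness of
`A` makes the dual torsion-free: a character of finite order takes values in a finite set of roots
of unity, so it is constant. The circle `ℝ ⧸ 2πℤ` maps to `ℝ` with torsion kernel: compose with a
`ℚ`-linear endomorphism of `ℝ` whose kernel is `ℚ ∙ 2π`, which exists because every subspace of a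
vector space has a complement. On a torsion-free subgroup of the circle this map is injective.
-/

open Function Real

namespace PontryaginDual

variable {A : Type*} [CommGroup A] [TopologicalSpace A]

noncomputable def evalHom (x : A) : PontryaginDual A →* Circle where
  toFun χ := χ x
  map_one' := rfl
  map_mul' _ _ := rfl

theorem injective_evalHom_of_dense_zpowers {a : A} (ha : Dense (Subgroup.zpowers a : Set A)) :
    Injective (evalHom a) := by
  intro χ ψ hχψ
  refine ext fun x => congrFun (Continuous.ext_on ha (map_continuous χ)
    (map_continuous ψ) ?_) x
  rintro _ ⟨k, rfl⟩
  simp only [map_zpow]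
  exact congrArg (· ^ k) hχψ

end PontryaginDual

noncomputable def Real.Angle.toCircleMulEquiv : Multiplicative Real.Angle ≃* Circle :=
  MulEquiv.mk' (Multiplicative.toAdd.trans AddCircle.homeomorphCircle'.toEquiv)
    fun θ₁ θ₂ => Real.Angle.toCircle_add θ₁.toAdd θ₂.toAdd

theorem Circle.finite_setOf_pow_eq_one {n : ℕ} (hn : 0 < n) :
    {z : Circle | z ^ n = 1}.Finite := by
  have : Fact (0 < 2 * π) := ⟨two_pi_pos⟩
  let e := Real.Angle.toCircleMulEquiv.symm
  refine ((AddCircle.finite_torsion (2 * π) hn).preimage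
    (e.injective.injOn (s := _))).subset fun z hz => ?_
  show n • (e z).toAdd = 0
  rw [← toAdd_pow, ← map_pow, Set.mem_ofPred_eq.mp hz, map_one, toAdd_one]

instance {A : Type*} [CommGroup A] [TopologicalSpace A]
    [ConnectedSpace A] : IsMulTorsionFree (PontryaginDual A) := by
  refine IsMulTorsionFree.of_not_isOfFinOrder fun χ hχ hfin => hχ ?_
  obtain ⟨n, hn, hχn⟩ := isOfFinOrder_iff_pow_eq_one.mp hfin
  have hrange : Set.range χ ⊆ {z : Circle | z ^ n = 1} := by
    rintro _ ⟨x, rfl⟩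
    have hχx := congrArg (PontryaginDual.evalHom x) hχn
    rwa [map_pow, map_one] at hχx
  have hsub : (Set.range χ).Subsingleton := by
    by_contra h
    exact (isPreconnected_range (map_continuous χ)).infinite_of_nontrivial
      (Set.not_subsingleton_iff.mp h) ((Circle.finite_setOf_pow_eq_one hn).subset hrange)
  exact PontryaginDual.ext fun x => hsub ⟨x, rfl⟩ ⟨1, rfl⟩ |>.trans (map_one χ)

theorem Submodule.exists_linearMap_ker_eq {K V : Type*} [DivisionRing K] [AddCommGroup V]
    [Module K V] (p : Submodule K V) : ∃ f : V →ₗ[K] V, LinearMap.ker f = p := by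
  obtain ⟨q, hpq⟩ := p.exists_isCompl
  refine ⟨q.subtype ∘ₗ q.projectionOnto p hpq.symm, ?_⟩
  rw [LinearMap.ker_comp_of_ker_eq_bot _ q.ker_subtype, Submodule.ker_projectionOnto]

theorem AddCircle.exists_addMonoidHom_real_ker_le_torsion (p : ℝ) [Fact (0 < p)] :
    ∃ f : AddCircle p →+ ℝ, f.ker ≤ AddCommGroup.torsion (AddCircle p) := by
  obtain ⟨g, hg⟩ := (Submodule.span ℚ {p}).exists_linearMap_ker_eq
  have hp : AddSubgroup.zmultiples p ≤ g.toAddMonoidHom.ker := by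
    rw [AddSubgroup.zmultiples_le]
    show p ∈ LinearMap.ker g
    exact hg ▸ Submodule.mem_span_singleton_self p
  refine ⟨QuotientAddGroup.lift _ g.toAddMonoidHom hp, fun x hx => ?_⟩
  induction x using QuotientAddGroup.induction_on with | H y => ?_
  have hy : y ∈ Submodule.span ℚ {p} := hg ▸ hx
  obtain ⟨r, rfl⟩ := Submodule.mem_span_singleton.mp hy
  refine AddCircle.isOfFinAddOrder_iff_exists_rat_eq_div.mpr ⟨r, ?_⟩
  rw [Rat.smul_def, mul_div_cancel_right₀ _ (Fact.out : 0 < p).ne']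

theorem Circle.exists_monoidHom_real_ker_le_torsion :
    ∃ f : Circle →* Multiplicative ℝ, f.ker ≤ CommGroup.torsion Circle := by
  have : Fact (0 < 2 * π) := ⟨two_pi_pos⟩
  obtain ⟨f, hf⟩ := AddCircle.exists_addMonoidHom_real_ker_le_torsion (2 * π)
  let e := Real.Angle.toCircleMulEquiv.symm
  refine ⟨(AddMonoidHom.toMultiplicative f).comp e.toMonoidHom, fun z hz => ?_⟩
  exact (e.injective.isOfFinOrder_iff (f := e.toMonoidHom)).mp
    (isOfFinOrder_ofAdd_iff (x := (e z).toAdd) |>.mpr (hf hz))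

theorem MonoidHom.injective_comp_of_ker_le_torsion {G H K : Type*} [Group G]
    [IsMulTorsionFree G] [CommGroup H] [Group K] {g : G →* H} (hg : Injective g)
    {f : H →* K} (hf : f.ker ≤ CommGroup.torsion H) : Injective (f.comp g) :=
  (injective_iff_map_eq_one _).mpr fun _ hx => (hg.isOfFinOrder_iff.mp (hf hx)).eq_one'

theorem dual_of_compact_connected_monothetic_general (A : Type*) [CommGroup A] [TopologicalSpace A]
    [ConnectedSpace A]
    (hmono : ∃ a : A, Dense ((Subgroup.zpowers a : Subgroup A) : Set A)) :
    ∃ f : PontryaginDual A →* Multiplicative ℝ, Function.Injective f := by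
  obtain ⟨a, ha⟩ := hmono
  obtain ⟨f, hf⟩ := Circle.exists_monoidHom_real_ker_le_torsion
  exact ⟨f.comp (PontryaginDual.evalHom a), MonoidHom.injective_comp_of_ker_le_torsion
    (PontryaginDual.injective_evalHom_of_dense_zpowers ha) hf⟩

/-- The Pontryagin dual of a compact connected monothetic abelian group embeds, as an
abstract group, into the additive group `ℝ` (with the discrete topology). -/
theorem dual_of_compact_connected_monothetic (A : Type*) [CommGroup A] [TopologicalSpace A]
    [IsTopologicalGroup A] [CompactSpace A] [T2Space A] [ConnectedSpace A]
    (hmono : ∃ a : A, Dense ((Subgroup.zpowers a : Subgroup A) : Set A)) :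
    ∃ f : PontryaginDual A →* Multiplicative ℝ, Function.Injective f :=
  dual_of_compact_connected_monothetic_general A hmono
end

section
/- Every subgroup G of GL_n(ℂ) of finite exponent is finite (Burnside). -/
/-!
Every element of `G` has eigenvalues among the `m`-th roots of unity, so the traces of elements
of `G` form a finite set. Choose finitely many `h₁, …, h_k ∈ G` spanning the linear span of `G`.
The vector `(tr (g hᵢ))ᵢ` determines the linear form `x ↦ tr (g x)` on that span, hence
determines `g`: if `g` and `g'` give the same vector, then `tr (g g'⁻¹) = tr 1 = n`, and a matrix
of finite order whose `n` eigenvalues (roots of unity) sum to `n` has all eigenvalues `1`; being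
diagonalizable, it is the identity. So `G` injects into a finite set.
-/

open Polynomial Matrix

theorem Complex.eq_one_of_re_eq_one_of_norm_le_one {z : ℂ} (hre : z.re = 1) (hz : ‖z‖ ≤ 1) :
    z = 1 :=
  Complex.ext hre (abs_re_eq_norm.1 (le_antisymm (abs_re_le_norm z) (by rwa [hre, abs_one])))

theorem Complex.eq_one_of_norm_le_one_of_sum_eq_card {s : Multiset ℂ}
    (hs : ∀ z ∈ s, ‖z‖ ≤ 1) (hsum : s.sum = s.card) : ∀ z ∈ s, z = 1 := by
  have hre_le : ∀ z ∈ s, z.re ≤ 1 := fun z hz => (re_le_norm z).trans (hs z hz)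
  have hre : ∀ z ∈ s, z.re = 1 := by
    by_contra! ⟨z, hz, hne⟩
    have hlt := Multiset.sum_lt_sum hre_le ⟨z, hz, (hre_le z hz).lt_of_ne hne⟩
    have hsum_re : (s.map re).sum = s.card := by
      simpa [hsum] using (map_multiset_sum reAddGroupHom s).symm
    simp [hsum_re] at hlt
  exact fun z hz => eq_one_of_re_eq_one_of_norm_le_one (hre z hz) (hs z hz)

/-- The minimal polynomial of `a` divides both the separable `X ^ m - 1` and `(X - 1) ^ N`,
so it divides `X - 1`. -/
theorem eq_one_of_pow_eq_one_of_sub_one_pow_eq_zero {K A : Type*} [Field K] [Ring A]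
    [Algebra K A] {m N : ℕ} (hm : (m : K) ≠ 0) {a : A} (ha : a ^ m = 1) (hN : (a - 1) ^ N = 0) :
    a = 1 := by
  rcases eq_or_ne N 0 with rfl | hN0
  · exact (subsingleton_of_zero_eq_one (by simpa using hN.symm)).elim _ _
  have hsq : Squarefree (minpoly K a) :=
    (X_pow_sub_one_separable_iff.2 hm).squarefree.squarefree_of_dvd
      (minpoly.dvd K a (by simp [ha]))
  have hdvd : minpoly K a ∣ (X - 1) ^ N := minpoly.dvd K a (by simp [hN])
  simpa [sub_eq_zero] using minpoly.dvd_iff.1 ((hsq.dvd_pow_iff_dvd hN0).1 hdvd)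

namespace Matrix

variable {K ι : Type*} [Field K] [Fintype ι] [DecidableEq ι]

theorem pow_eq_one_of_mem_roots_charpoly {m : ℕ} {u : Matrix ι ι K} (hu : u ^ m = 1)
    {μ : K} (hμ : μ ∈ u.charpoly.roots) : μ ^ m = 1 := by
  rcases isEmpty_or_nonempty ι with hι | hι
  · simp [charpoly_isEmpty] at hμ
  have hspec : μ ∈ spectrum K u :=
    mem_spectrum_iff_isRoot_charpoly.2 ((mem_roots u.charpoly_monic.ne_zero).1 hμ)
  simpa [hu, spectrum.one_eq] using spectrum.pow_mem_pow u m hspec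

theorem card_roots_charpoly [IsAlgClosed K] (u : Matrix ι ι K) :
    u.charpoly.roots.card = Fintype.card ι := by
  rw [← Splits.natDegree_eq_card_roots (IsAlgClosed.splits _), charpoly_natDegree_eq_dim]

theorem sub_one_pow_card_eq_zero_of_roots_charpoly {u : Matrix ι ι K} (hsplit : u.charpoly.Splits)
    (h : ∀ μ ∈ u.charpoly.roots, μ = 1) : (u - 1) ^ Fintype.card ι = 0 := by
  have hroots : u.charpoly.roots = Multiset.replicate (Fintype.card ι) 1 := by
    refine Multiset.eq_replicate.2 ⟨?_, h⟩
    rw [← hsplit.natDegree_eq_card_roots, charpoly_natDegree_eq_dim]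
  have hchar : u.charpoly = (X - 1) ^ Fintype.card ι := by
    rw [hsplit.eq_prod_roots_of_monic u.charpoly_monic, hroots]
    simp
  simpa [hchar] using aeval_self_charpoly u

theorem eq_one_of_pow_eq_one_of_trace_eq_card {m : ℕ} (hm : m ≠ 0)
    {u : Matrix ι ι ℂ} (hu : u ^ m = 1) (htr : u.trace = Fintype.card ι) : u = 1 := by
  have hroots : ∀ μ ∈ u.charpoly.roots, μ = 1 := by
    refine Complex.eq_one_of_norm_le_one_of_sum_eq_card (fun μ hμ => ?_) ?_
    · exact (Complex.norm_eq_one_of_pow_eq_one (pow_eq_one_of_mem_roots_charpoly hu hμ) hm).le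
    · rw [← trace_eq_sum_roots_charpoly, htr, card_roots_charpoly]
  exact eq_one_of_pow_eq_one_of_sub_one_pow_eq_zero (K := ℂ) (Nat.cast_ne_zero.2 hm) hu
    (sub_one_pow_card_eq_zero_of_roots_charpoly (IsAlgClosed.splits _) hroots)

theorem finite_setOf_trace_of_pow_eq_one [IsAlgClosed K] {m : ℕ} (hm : 0 < m) :
    {t | ∃ u : Matrix ι ι K, u ^ m = 1 ∧ u.trace = t}.Finite := by
  classical
  refine (((nthRootsFinset m (1 : K)).sym (Fintype.card ι)).image
    fun s : Sym K _ => (s : Multiset K).sum).finite_toSet.subset ?_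
  rintro _ ⟨u, hu, rfl⟩
  refine Finset.mem_image.2 ⟨⟨u.charpoly.roots, card_roots_charpoly u⟩, ?_, ?_⟩
  · exact Finset.mem_sym_iff.2 fun μ hμ =>
      (mem_nthRootsFinset hm 1).2 (pow_eq_one_of_mem_roots_charpoly hu hμ)
  · exact (trace_eq_sum_roots_charpoly u).symm

theorem GeneralLinearGroup.finite_of_finite_traces (G : Subgroup (GL ι K))
    (htr : {t | ∃ g ∈ G, trace (g : Matrix ι ι K) = t}.Finite)
    (hone : ∀ g ∈ G, trace (g : Matrix ι ι K) = Fintype.card ι → g = 1) : Finite G := by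
  set S : Set (Matrix ι ι K) := (↑) '' (G : Set (GL ι K))
  obtain ⟨B, hBS, hspan⟩ := (Submodule.fg_span_iff_fg_span_finset_subset (R := K) S).1
    (IsNoetherian.noetherian _)
  let Φ : G → B → K := fun g x => trace (((g : GL ι K) : Matrix ι ι K) * x.1)
  have hΦ : Function.Injective Φ := by
    rintro ⟨g, hg⟩ ⟨h, hh⟩ hgh
    let traceMul (a : Matrix ι ι K) : Matrix ι ι K →ₗ[K] K :=
      traceLinearMap ι K K ∘ₗ LinearMap.mulLeft K a
    have heq : Set.EqOn (traceMul g) (traceMul h) (Submodule.span K S) := by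
      rw [hspan]
      exact LinearMap.eqOn_span' fun x hx => congrFun hgh ⟨x, hx⟩
    have hmem : ((h⁻¹ : GL ι K) : Matrix ι ι K) ∈ Submodule.span K S :=
      Submodule.subset_span ⟨_, G.inv_mem hh, rfl⟩
    have hgh_inv : g * h⁻¹ = 1 := by
      refine hone _ (G.mul_mem hg (G.inv_mem hh)) ?_
      have := heq hmem
      simp only [traceMul, LinearMap.comp_apply, LinearMap.mulLeft_apply,
        traceLinearMap_apply] at this
      rw [Units.val_mul, this, Units.mul_inv, trace_one]
    exact Subtype.ext (mul_inv_eq_one.1 hgh_inv)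
  have hrange :
      Set.range Φ ⊆ Set.univ.pi fun _ => {t | ∃ g ∈ G, trace (g : Matrix ι ι K) = t} := by
    rintro _ ⟨g, rfl⟩ ⟨x, hx⟩ -
    obtain ⟨h, hh, rfl⟩ := hBS hx
    exact ⟨g * h, G.mul_mem g.2 hh, by simp [Φ]⟩
  have : Finite (Set.range Φ) := ((Set.Finite.pi fun _ => htr).subset hrange).to_subtype
  exact Finite.of_injective_finite_range hΦ

end Matrix

/-- Burnside: a linear group of finite exponent is finite. -/
theorem burnside_bounded_exponent (n : ℕ) (G : Subgroup (GL (Fin n) ℂ))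
    (hexp : ∃ m : ℕ, 1 ≤ m ∧ ∀ g ∈ G, g ^ m = 1) : Finite G := by
  obtain ⟨m, hm, hpow⟩ := hexp
  have hpow_val : ∀ g ∈ G, (g : Matrix (Fin n) (Fin n) ℂ) ^ m = 1 := fun g hg => by
    rw [← Units.val_pow_eq_pow_val, hpow g hg, Units.val_one]
  refine GeneralLinearGroup.finite_of_finite_traces G ?_ fun g hg htr => ?_
  · exact (finite_setOf_trace_of_pow_eq_one hm).subset
      fun _ ⟨g, hg, htr⟩ => ⟨_, hpow_val g hg, htr⟩
  · exact Units.ext (eq_one_of_pow_eq_one_of_trace_eq_card (by omega) (hpow_val g hg) htr)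
end

section
/- If G is a discrete simple group containing an infinite elementary abelian p-subgroup, then KO(G) = G; i.e., every homomorphism from G to GL_n(ℂ) is trivial. -/
/-!
If `ρ` were non-trivial it would be injective, `G` being simple, and so would embed the infinite
elementary abelian `p`-subgroup into `GL_n(ℂ)`. But commuting matrices with `Aᵖ = 1` are
simultaneously diagonalizable with eigenvalues among the `p`-th roots of unity, so there are at
most `p ^ n` of them.
-/

open Polynomial

namespace Module.End

variable {ι K V : Type*} [Field K] [AddCommGroup V] [Module K V]

lemma apply_eq_smul_of_mem_iInf_maxGenEigenspace {f : ι → End K V}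
    (hf : ∀ i, (f i).IsSemisimple) {χ : ι → K} {x : V}
    (hx : x ∈ ⨅ i, (f i).maxGenEigenspace (χ i)) (i : ι) : f i x = χ i • x := by
  have hxi := (Submodule.mem_iInf _).mp hx i
  rw [(hf i).isFinitelySemisimple.maxGenEigenspace_eq_eigenspace] at hxi
  exact mem_eigenspace_iff.mp hxi

lemma isRoot_of_hasEigenvector_of_aeval_eq_zero {f : End K V} {q : K[X]} (hq : aeval f q = 0)
    {μ : K} {x : V} (hx : f.HasEigenvector μ x) : q.IsRoot μ := by
  have h := aeval_apply_of_hasEigenvector (p := q) hx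
  rw [hq, LinearMap.zero_apply, eq_comm, smul_eq_zero] at h
  exact h.resolve_right hx.2

lemma finite_setOf_iInf_maxGenEigenspace_ne_bot [FiniteDimensional K V] {f : ι → End K V}
    (hf : Pairwise fun i j ↦ Commute (f i) (f j)) :
    {χ : ι → K | ⨅ i, (f i).maxGenEigenspace (χ i) ≠ ⊥}.Finite :=
  WellFoundedGT.finite_ne_bot_of_iSupIndep <|
    independent_iInf_maxGenEigenspace_of_forall_mapsTo f fun i j μ ↦ by
      obtain rfl | hij := eq_or_ne i j
      · exact mapsTo_maxGenEigenspace_of_comm (Commute.refl _) μ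
      · exact mapsTo_maxGenEigenspace_of_comm (hf hij.symm) μ

theorem finite_of_pairwise_commute_of_aeval_eq_zero [IsAlgClosed K] [FiniteDimensional K V]
    {A : Set (End K V)} {q : K[X]} (hq : Squarefree q) (hqA : ∀ f ∈ A, aeval f q = 0)
    (hA : A.Pairwise Commute) : A.Finite := by
  set W : (A → K) → Submodule K V := fun χ ↦ ⨅ f : A, (f : End K V).maxGenEigenspace (χ f)
  have hss (f : A) : (f : End K V).IsSemisimple :=
    isSemisimple_of_squarefree_aeval_eq_zero hq (hqA f f.2)
  have hcomm : Pairwise fun f g : A ↦ Commute (f : End K V) g :=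
    fun f g hfg ↦ hA f.2 g.2 (Subtype.coe_ne_coe.mpr hfg)
  have hW_top : ⨆ χ, W χ = ⊤ :=
    iSup_iInf_maxGenEigenspace_eq_top_of_iSup_maxGenEigenspace_eq_top_of_commute _ hcomm
      fun f ↦ iSup_maxGenEigenspace_eq_top _
  set S := {χ | W χ ≠ ⊥}
  have hS : S.Finite := finite_setOf_iInf_maxGenEigenspace_ne_bot hcomm
  set T := {z | q.IsRoot z}
  have hT : T.Finite := finite_setOfPred_isRoot hq.ne_zero
  have hroot (χ : S) (f : A) : χ.1 f ∈ T := by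
    obtain ⟨x, hx, hx0⟩ := Submodule.exists_mem_ne_zero_of_ne_bot χ.2
    exact isRoot_of_hasEigenvector_of_aeval_eq_zero (hqA f f.2)
      ⟨mem_eigenspace_iff.mpr (apply_eq_smul_of_mem_iInf_maxGenEigenspace hss hx f), hx0⟩
  let Φ : A → S → T := fun f χ ↦ ⟨χ.1 f, hroot χ f⟩
  have hΦ : Function.Injective Φ := by
    intro f g hfg
    suffices ⨆ χ, W χ ≤ LinearMap.eqLocus (f : End K V) g by
      rw [hW_top, top_le_iff, LinearMap.eqLocus_eq_top] at this
      exact Subtype.ext this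
    refine iSup_le fun χ ↦ ?_
    by_cases hχ : W χ = ⊥
    · simp [hχ]
    intro x hx
    have : χ f = χ g := congr_arg Subtype.val (congr_fun hfg ⟨χ, hχ⟩)
    simp only [LinearMap.mem_eqLocus, apply_eq_smul_of_mem_iInf_maxGenEigenspace hss hx, this]
  have := hS.to_subtype
  have := hT.to_subtype
  exact Set.finite_coe_iff.mp (_root_.Finite.of_injective Φ hΦ)

end Module.End

namespace Matrix.GeneralLinearGroup

theorem finite_of_isMulCommutative_of_pow_eq_one {n K : Type*} [Fintype n] [DecidableEq n]
    [Field K] [IsAlgClosed K] {m : ℕ} (hm : (m : K) ≠ 0) (H : Subgroup (GL n K))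
    [IsMulCommutative H] (hH : ∀ g ∈ H, g ^ m = 1) : Finite H := by
  let φ : GL n K →* Module.End K (n → K) :=
    (Matrix.toLinAlgEquiv' : Matrix n n K ≃ₐ[K] _).toMonoidHom.comp (Units.coeHom _)
  have hφ : Function.Injective φ := Matrix.toLinAlgEquiv'.injective.comp Units.val_injective
  have hfin : (φ '' H).Finite := by
    refine Module.End.finite_of_pairwise_commute_of_aeval_eq_zero
      (separable_X_pow_sub_C (1 : K) hm one_ne_zero).squarefree ?_ ?_
    · rintro _ ⟨g, hg, rfl⟩
      rw [map_sub, map_pow, aeval_X, aeval_C, map_one, ← map_pow, hH g hg, map_one, sub_self]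
    · rintro _ ⟨g, hg, rfl⟩ _ ⟨h, hh, rfl⟩ -
      exact Commute.map (setLike_mul_comm hg hh) φ
  exact (hfin.of_finite_image hφ.injOn).to_subtype

end Matrix.GeneralLinearGroup

/-- A simple group containing an infinite elementary abelian `p`-subgroup admits no
non-trivial finite-dimensional complex representation; i.e. `KO(G) = G`. -/
theorem KO_eq_top_of_simple_with_infinite_elementary_abelian {G : Type*} [Group G]
    [IsSimpleGroup G]
    (h : ∃ p : ℕ, p.Prime ∧ ∃ H : Subgroup G, Infinite H ∧ IsMulCommutative H ∧
      ∀ g ∈ H, g ^ p = 1) :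
    ∀ (n : ℕ) (ρ : G →* GL (Fin n) ℂ) (g : G), ρ g = 1 := by
  intro n ρ g
  obtain ⟨p, hp, H, hH_inf, hH_comm, hH_exp⟩ := h
  have hker : ρ.ker ≠ ⊥ := by
    intro hker
    have hρ : Function.Injective ρ := (MonoidHom.ker_eq_bot_iff ρ).mp hker
    have : Finite (H.map ρ) :=
      Matrix.GeneralLinearGroup.finite_of_isMulCommutative_of_pow_eq_one
        (Nat.cast_ne_zero.mpr hp.ne_zero) _ <| by
          rintro _ ⟨g, hg, rfl⟩
          rw [← map_pow, hH_exp g hg, map_one]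
    exact not_finite_iff_infinite.mpr hH_inf <|
      Finite.of_equiv _ (H.equivMapOfInjective ρ hρ).symm.toEquiv
  rw [← MonoidHom.mem_ker, ρ.normal_ker.eq_bot_or_eq_top.resolve_left hker]
  exact Subgroup.mem_top g
end
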